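/- The Google matrix $\tilde{P} = (1-c)P + \frac{c}{n}E$ has a stationary distribution: there exists a probability vector $\pi$ (nonnegative entries summing to 1) with $\pi \tilde{P} = \pi$. -/

import Mathlib

/-! The map `x ↦ x ᵥ* G` sends the probability simplex into itself. On a difference of two
probability vectors, which sums to zero, the teleportation term `c • v` cancels, so
`x ᵥ* G - y ᵥ* G = (1 - c) • ((x - y) ᵥ* P)`; since a stochastic `P` does not increase the `ℓ¹`
norm, `x ↦ x ᵥ* G` is a `(1 - c)`-contraction of the simplex in the `ℓ¹` metric, and Banach's
fixed point theorem yields the stationary distribution. -/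

open Finset

theorem const_inv_card_mem_stdSimplex {ι : Type*} [Fintype ι] [Nonempty ι] :
    (fun _ => (Fintype.card ι : ℝ)⁻¹) ∈ stdSimplex ℝ ι := by
  refine ⟨fun _ => by positivity, ?_⟩
  rw [sum_const, card_univ, nsmul_eq_mul, mul_inv_cancel₀ (by positivity)]

namespace Matrix

variable {ι : Type*} [Fintype ι] {P G : Matrix ι ι ℝ} {v : ι → ℝ} {c : ℝ}

theorem vecMul_eq_smul_vecMul_of_damping (hG : ∀ i j, G i j = (1 - c) * P i j + c * v j)
    {x : ι → ℝ} (hx : ∑ i, x i = 0) : x ᵥ* G = (1 - c) • (x ᵥ* P) := by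
  ext j
  have hteleport : ∑ i, x i * (c * v j) = 0 := by rw [← sum_mul, hx, zero_mul]
  simp only [vecMul, dotProduct, hG, mul_add, sum_add_distrib, hteleport, add_zero,
    Pi.smul_apply, smul_eq_mul, mul_sum]
  exact sum_congr rfl fun i _ => by ring

variable [DecidableEq ι]

theorem sum_abs_vecMul_le_of_mem_rowStochastic (hP : P ∈ rowStochastic ℝ ι) (x : ι → ℝ) :
    ∑ j, |(x ᵥ* P) j| ≤ ∑ i, |x i| :=
  calc ∑ j, |(x ᵥ* P) j| ≤ ∑ j, ∑ i, |x i| * P i j := by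
        gcongr with j
        refine (abs_sum_le_sum_abs _ _).trans_eq (sum_congr rfl fun i _ => ?_)
        rw [abs_mul, abs_of_nonneg (nonneg_of_mem_rowStochastic hP)]
    _ = ∑ i, |x i| := by
        rw [sum_comm]
        simp_rw [← mul_sum, sum_row_of_mem_rowStochastic hP, mul_one]

theorem exists_mem_stdSimplex_vecMul_eq_self_of_contraction [Nonempty ι]
    (hG : G ∈ rowStochastic ℝ ι) {K : ℝ} (hK : K < 1)
    (hcontr : ∀ x : ι → ℝ, ∑ i, x i = 0 → ∑ j, |(x ᵥ* G) j| ≤ K * ∑ i, |x i|) :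
    ∃ π ∈ stdSimplex ℝ ι, π ᵥ* G = π := by
  let s : Set (PiLp 1 fun _ : ι => ℝ) := WithLp.ofLp ⁻¹' stdSimplex ℝ ι
  let f (x : PiLp 1 fun _ : ι => ℝ) : PiLp 1 fun _ : ι => ℝ := WithLp.toLp 1 (x.ofLp ᵥ* G)
  have hsc : IsComplete s :=
    ((isClosed_stdSimplex ℝ ι).preimage (PiLp.continuous_ofLp 1 _)).isComplete
  have hsf : Set.MapsTo f s s := fun x hx => by
    refine ⟨nonneg_vecMul_of_mem_rowStochastic hG hx.1, ?_⟩
    have hx1 : x.ofLp ⬝ᵥ 1 = 1 := by rw [dotProduct_one]; exact hx.2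
    simpa only [dotProduct_one] using vecMul_dotProduct_one_eq_one_rowStochastic hG hx1
  have hf : ContractingWith K.toNNReal (hsf.restrict f s s) := by
    refine ⟨Real.toNNReal_lt_one.2 hK, LipschitzWith.of_dist_le_mul fun x y => ?_⟩
    have hsum : ∑ i, (x.1.ofLp - y.1.ofLp) i = 0 := by
      simp only [Pi.sub_apply, sum_sub_distrib, x.2.2, y.2.2, sub_self]
    have hK_le : K * ∑ i, |(x.1.ofLp - y.1.ofLp) i| ≤
        K.toNNReal * ∑ i, |(x.1.ofLp - y.1.ofLp) i| := by
      gcongr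
      exact Real.le_coe_toNNReal K
    simpa only [Subtype.dist_eq, PiLp.dist_eq_of_L1, Real.dist_eq, sub_vecMul, Pi.sub_apply,
      Set.MapsTo.val_restrict_apply, f, WithLp.ofLp_toLp] using (hcontr _ hsum).trans hK_le
  obtain ⟨i⟩ := ‹Nonempty ι›
  obtain ⟨π, hπ, hfix, -⟩ := hf.exists_fixedPoint' hsc hsf
    (x := WithLp.toLp 1 (Pi.single i 1)) (single_mem_stdSimplex ℝ i) (edist_ne_top _ _)
  exact ⟨π.ofLp, hπ, congrArg WithLp.ofLp hfix⟩

theorem mem_rowStochastic_of_damping (hP : P ∈ rowStochastic ℝ ι) (hv : v ∈ stdSimplex ℝ ι)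
    (hc0 : 0 ≤ c) (hc1 : c ≤ 1) (hG : ∀ i j, G i j = (1 - c) * P i j + c * v j) :
    G ∈ rowStochastic ℝ ι := by
  refine mem_rowStochastic_iff_sum.2 ⟨fun i j => ?_, fun i => ?_⟩
  · rw [hG]
    exact add_nonneg (mul_nonneg (sub_nonneg.2 hc1) (nonneg_of_mem_rowStochastic hP))
      (mul_nonneg hc0 (hv.1 j))
  · simp_rw [hG, sum_add_distrib, ← mul_sum, sum_row_of_mem_rowStochastic hP, hv.2]
    ring

theorem exists_mem_stdSimplex_vecMul_eq_self_of_damping [Nonempty ι]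
    (hP : P ∈ rowStochastic ℝ ι) (hv : v ∈ stdSimplex ℝ ι) (hc0 : 0 < c) (hc1 : c ≤ 1)
    (hG : ∀ i j, G i j = (1 - c) * P i j + c * v j) : ∃ π ∈ stdSimplex ℝ ι, π ᵥ* G = π := by
  refine exists_mem_stdSimplex_vecMul_eq_self_of_contraction
    (mem_rowStochastic_of_damping hP hv hc0.le hc1 hG) (sub_lt_self 1 hc0) fun x hx => ?_
  rw [vecMul_eq_smul_vecMul_of_damping hG hx]
  simp only [Pi.smul_apply, smul_eq_mul, abs_mul, abs_of_nonneg (sub_nonneg.2 hc1), ← mul_sum]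
  exact mul_le_mul_of_nonneg_left (sum_abs_vecMul_le_of_mem_rowStochastic hP x)
    (sub_nonneg.2 hc1)

end Matrix

open Matrix in
theorem google_matrix_stationary_exists
    (n : ℕ) (hn : 1 ≤ n) (P : Matrix (Fin n) (Fin n) ℝ)
    (hP_nonneg : ∀ i j, 0 ≤ P i j)
    (hP_rows : ∀ i, ∑ j, P i j = 1)
    (c : ℝ) (hc : c ∈ Set.Ioo (0 : ℝ) 1)
    (G : Matrix (Fin n) (Fin n) ℝ)
    (hG : ∀ i j, G i j = (1 - c) * P i j + c / n) :
    ∃ π : Fin n → ℝ, (∀ i, 0 ≤ π i) ∧ (∑ i, π i = 1) ∧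
      (∀ j, ∑ i, π i * G i j = π j) := by
  have : Nonempty (Fin n) := ⟨⟨0, hn⟩⟩
  obtain ⟨π, ⟨hπ_nonneg, hπ_sum⟩, hπ⟩ := exists_mem_stdSimplex_vecMul_eq_self_of_damping (G := G)
    (mem_rowStochastic_iff_sum.2 ⟨hP_nonneg, hP_rows⟩) const_inv_card_mem_stdSimplex hc.1 hc.2.le
    fun i j => by rw [hG, Fintype.card_fin, div_eq_mul_inv]
  exact ⟨π, hπ_nonneg, hπ_sum, congrFun hπ⟩
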